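/- arXiv:1604.07062 — 2 statements merged into one kernel-verified Lean document; each statement's English description precedes it below -/
import Mathlib

section
/- For the gadget g(x,y) := x₁ + y₁ + x₂y₂ + x₃y₃ (mod 2), and each b ∈ {0,1}, the digraph 𝒢^b whose nodes are the b-inputs of g, with an edge from (x,y) to (x',y') iff x = x' or y = y', is strongly connected. -/
/-!
Call two rows `x, x'` linked if some column `y` has `g(x, y) = g(x', y) = b`; then `(x, y)`
reaches `(x', y')` along the path `(x, y) → (x, z) → (x', z) → (x', y')` through a common
column `z`, so it suffices that the linking relation connects all rows. For the gadget,
`g(x, y) - g(x', y) = (x 0 - x' 0) + (x 1 - x' 1) * y 1 + (x 2 - x' 2) * y 2`, so rows with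
`x 1 ≠ x' 1` are linked, and any two rows are joined through a row differing from both at `1`.
-/

/-- The gadget g(x,y) = x₁ + y₁ + x₂y₂ + x₃y₃ (mod 2). -/
def gadget (x y : Fin 3 → ZMod 2) : ZMod 2 :=
  x 0 + y 0 + x 1 * y 1 + x 2 * y 2

open Relation

section Fiber

variable {X Y B : Type*} (f : X → Y → B) (b : B)

def FiberAdj (a c : {pq : X × Y // f pq.1 pq.2 = b}) : Prop :=
  a.1.1 = c.1.1 ∨ a.1.2 = c.1.2

def ShareColumn (x x' : X) : Prop :=
  ∃ y, f x y = b ∧ f x' y = b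

variable {f b}

theorem FiberAdj.reflTransGen_of_shareColumn
    (p q : {pq : X × Y // f pq.1 pq.2 = b})
    (h : ReflTransGen (ShareColumn f b) p.1.1 q.1.1) :
    ReflTransGen (FiberAdj f b) p q := by
  suffices key : ∀ x, ReflTransGen (ShareColumn f b) p.1.1 x →
      ∀ q : {pq : X × Y // f pq.1 pq.2 = b}, q.1.1 = x → ReflTransGen (FiberAdj f b) p q from
    key _ h q rfl
  intro x hx
  induction hx with
  | refl => exact fun q hq => .single (.inl hq.symm)
  | @tail x₁ x₂ _ hshare ih =>
    intro q hq
    obtain ⟨y, hy₁, hy₂⟩ := hshare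
    let m₁ : {pq : X × Y // f pq.1 pq.2 = b} := ⟨(x₁, y), hy₁⟩
    let m₂ : {pq : X × Y // f pq.1 pq.2 = b} := ⟨(x₂, y), hy₂⟩
    have hm₁m₂ : FiberAdj f b m₁ m₂ := .inr rfl
    exact ((ih m₁ rfl).tail hm₁m₂).tail (.inl hq.symm)

end Fiber

theorem gadget_shareColumn (b : ZMod 2) {x x' : Fin 3 → ZMod 2} (h : x 1 ≠ x' 1) :
    ShareColumn gadget b x x' := by
  have hx' : x' 1 = x 1 + 1 := by
    generalize x 1 = a at *; generalize x' 1 = c at *; revert a c; decide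
  -- With `y 2 = 0` the two values differ by `x 0 + x' 0 + y 1`: choose `y 1` to cancel it,
  -- then `y 0` to reach `b`.
  refine ⟨![b + x 0 + x 1 * (x 0 + x' 0), x 0 + x' 0, 0], ?_, ?_⟩ <;>
    simp only [gadget, hx', Matrix.cons_val_zero, Matrix.cons_val_one, Matrix.cons_val_two,
      Matrix.head_cons, Matrix.tail_cons, mul_zero, add_zero] <;>
    ring_nf <;> reduce_mod_char

theorem gadget_reflTransGen_shareColumn (b : ZMod 2) (x x' : Fin 3 → ZMod 2) :
    ReflTransGen (ShareColumn gadget b) x x' := by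
  by_cases h : x 1 = x' 1
  · let x'' := Function.update x 1 (x 1 + 1)
    have hx'' : x 1 ≠ x'' 1 := by simp [x'']
    exact .tail (.single (gadget_shareColumn b hx'')) (gadget_shareColumn b (h ▸ hx'').symm)
  · exact .single (gadget_shareColumn b h)

/-- For each b ∈ {0,1}, the digraph 𝒢^b on the b-inputs of the gadget, with an edge from
(x,y) to (x',y') iff x = x' or y = y', is strongly connected: every node reaches every
node via directed edges. -/
theorem stmt8 (b : ZMod 2)
    (p q : {pq : (Fin 3 → ZMod 2) × (Fin 3 → ZMod 2) // gadget pq.1 pq.2 = b}) :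
    Relation.ReflTransGen
      (fun a c : {pq : (Fin 3 → ZMod 2) × (Fin 3 → ZMod 2) // gadget pq.1 pq.2 = b} =>
        a.1.1 = c.1.1 ∨ a.1.2 = c.1.2) p q :=
  FiberAdj.reflTransGen_of_shareColumn p q (gadget_reflTransGen_shareColumn b _ _)
end

section
/- Let D be a finite digraph with a self-loop at every node, and suppose (ignoring self-loops) D has a closed eulerian tour visiting each node the same number of times and using each of the L non-self-loop edges exactly once. Then there exists a probability distribution over walks v_{i_0}, v_{i_1}, …, v_{i_{2L}} of length 2L in D such that: (i) the first node v_{i_0} and last node v_{i_{2L}} are independent and each uniformly distributed over the nodes of the tour sequence; and (ii) each of the 2L consecutive edges of the walk is marginally distributed as a uniform mixture putting mass 1/2 uniformly on self-loops and mass 1/2 uniformly on non-self-loop edges. -/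
/-!
Start at a uniformly random position `i` of the tour and follow it lazily: with a fair coin `c`
and a uniform `m ∈ {0, …, L - 1}`, the walk advances along the tour during the first `m` of its
`2L` steps and then idles on self-loops (`c = false`), or idles during the first `m` steps and
then advances (`c = true`). For fixed `m` the two values of `c` give complementary step
patterns, so each step is a tour edge with probability `1/2`; since `i` is uniform and
independent of the pattern, that edge is a uniform one of the `L` tour edges, and a self-loop
sits at a node distributed like a uniform tour position, i.e. uniformly by equal visits. The
total advance is `m` or `2L - m ≡ -m (mod L)`, uniform and independent of `i`, so the last
node is uniform and independent of the first.
-/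

open Finset

section UniformLaw

variable {Ω α : Type*} [Fintype Ω] [DecidableEq α]

noncomputable def uniformLaw (W : Ω → α) (x : α) : ℝ :=
  #{ω | W ω = x} / Fintype.card Ω

lemma uniformLaw_nonneg (W : Ω → α) (x : α) : 0 ≤ uniformLaw W x := by
  unfold uniformLaw; positivity

lemma sum_filter_uniformLaw [Fintype α] (W : Ω → α) (p : α → Prop) [DecidablePred p] :
    ∑ x ∈ univ.filter p, uniformLaw W x = #{ω | p (W ω)} / Fintype.card Ω := by
  simp only [uniformLaw, ← sum_div]
  rw [← Nat.cast_sum, sum_card_fiberwise_eq_card_filter]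
  simp

lemma sum_uniformLaw [Fintype α] [Nonempty Ω] (W : Ω → α) : ∑ x, uniformLaw W x = 1 := by
  simpa [Fintype.card_ne_zero] using sum_filter_uniformLaw W (fun _ => True)

lemma exists_eq_of_uniformLaw_ne_zero {W : Ω → α} {x : α} (h : uniformLaw W x ≠ 0) :
    ∃ ω, W ω = x := by
  by_contra! hW
  simp [uniformLaw, hW] at h

end UniformLaw

section Shift

variable {G Q : Type*} [AddGroup G] [Fintype G] [Fintype Q]

lemma card_filter_shift_prod (f : Q → G) (A : Q → Prop) (P : G → Prop) [DecidablePred A]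
    [DecidablePred P] :
    #{x : G × Q | A x.2 ∧ P (x.1 + f x.2)} = #{q | A q} * #{g | P g} := by
  let e : G × Q ≃ G × Q :=
    { toFun := fun x => (x.1 + f x.2, x.2), invFun := fun x => (x.1 - f x.2, x.2),
      left_inv := fun x => by simp, right_inv := fun x => by simp }
  rw [mul_comm, ← card_product]
  exact card_equiv e fun x => by simp [e, and_comm]

lemma card_filter_shift_bijective_prod (e : Q → G → G) (he : ∀ q, Function.Bijective (e q))
    (P R : G → Prop) [DecidablePred P] [DecidablePred R] :
    #{x : G × Q × G | P x.1 ∧ R (x.1 + e x.2.1 x.2.2)} =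
      Fintype.card Q * #{g | P g} * #{g | R g} := by
  let E : G × Q × G ≃ G × Q × G :=
    Equiv.prodShear (Equiv.refl G) fun i => Equiv.prodShear (Equiv.refl Q) fun q =>
      (Equiv.ofBijective (e q) (he q)).trans (Equiv.addLeft i)
  calc _ = #(univ.filter P ×ˢ ((univ : Finset Q) ×ˢ univ.filter R)) :=
        card_equiv E fun x => by simp [E]
    _ = _ := by rw [card_product, card_product, card_univ]; ring

end Shift

lemma card_filter_bool_iff {M : Type*} [Fintype M] (R : M → Prop) [DecidablePred R] :
    #{x : Bool × M | x.1 = true ↔ R x.2} = Fintype.card M := by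
  rw [← card_univ]
  refine card_nbij' Prod.snd (fun m => (decide (R m), m)) ?_ ?_ ?_ ?_ <;>
    simp [Set.MapsTo, Set.LeftInvOn]

def lazyPos (c : Bool) (m k : ℕ) : ℕ := if c then k - m else min k m

lemma lazyPos_zero (c : Bool) (m : ℕ) : lazyPos c m 0 = 0 := by
  cases c <;> simp [lazyPos]

lemma lazyPos_succ (c : Bool) (m k : ℕ) :
    lazyPos c m (k + 1) = lazyPos c m k + if (c = true ↔ m ≤ k) then 1 else 0 := by
  cases c <;> simp only [lazyPos] <;> split_ifs <;> simp_all <;> omega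

lemma natCast_lazyPos_two_mul {L : ℕ} [NeZero L] (c : Bool) (m : ZMod L) :
    (lazyPos c m.val (2 * L) : ZMod L) = if c then -m else m := by
  have hm := (ZMod.val_lt m).le
  cases c
  · simp [lazyPos, show m.val ≤ 2 * L by omega]
  · simp [lazyPos, Nat.cast_sub (show m.val ≤ 2 * L by omega)]

section LazyWalk

variable {N : Type*} {L : ℕ} (tour : ZMod L → N)

def lazyWalk (x : ZMod L × Bool × ZMod L) (k : ℕ) : N :=
  tour (x.1 + lazyPos x.2.1 x.2.2.val k)

lemma lazyWalk_succ (x : ZMod L × Bool × ZMod L) (k : ℕ) :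
    lazyWalk tour x (k + 1) =
      if (x.2.1 = true ↔ x.2.2.val ≤ k) then tour (x.1 + lazyPos x.2.1 x.2.2.val k + 1)
      else lazyWalk tour x k := by
  unfold lazyWalk
  rw [lazyPos_succ]
  split_ifs <;> simp [add_assoc]

lemma lazyWalk_rel (rel : N → N → Prop) (hself : ∀ n, rel n n)
    (hstep : ∀ i, rel (tour i) (tour (i + 1))) (x : ZMod L × Bool × ZMod L) (k : ℕ) :
    rel (lazyWalk tour x k) (lazyWalk tour x (k + 1)) := by
  rw [lazyWalk_succ]
  split_ifs
  · exact hstep _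
  · exact hself _

variable [NeZero L] [DecidableEq N]

lemma card_lazyWalk_first_last (a b : N) :
    #{x | lazyWalk tour x 0 = a ∧ lazyWalk tour x (2 * L) = b} =
      2 * #{i | tour i = a} * #{i | tour i = b} := by
  simp only [lazyWalk, lazyPos_zero, Nat.cast_zero, add_zero, natCast_lazyPos_two_mul]
  refine (card_filter_shift_bijective_prod (fun (c : Bool) (m : ZMod L) => if c then -m else m)
    (fun c => ?_) (fun g => tour g = a) (fun g => tour g = b)).trans (by rw [Fintype.card_bool])
  cases c
  exacts [Function.bijective_id, neg_bijective]

lemma card_lazyWalk_stay (hne : ∀ i, tour i ≠ tour (i + 1)) (k : ℕ) (a : N) :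
    #{x | lazyWalk tour x k = a ∧ lazyWalk tour x (k + 1) = a} = L * #{i | tour i = a} := by
  have hevent : ∀ x : ZMod L × Bool × ZMod L,
      (lazyWalk tour x k = a ∧ lazyWalk tour x (k + 1) = a) ↔
        (x.2.1 = true ↔ k < x.2.2.val) ∧ tour (x.1 + lazyPos x.2.1 x.2.2.val k) = a := by
    intro x
    rw [lazyWalk_succ]
    split_ifs with h
    · refine ⟨fun h' => (hne _ (h'.1.trans h'.2.symm)).elim, fun h' => ?_⟩
      exact absurd (h.symm.trans h'.1) (by omega)
    · have hstay : x.2.1 = true ↔ k < x.2.2.val := by rw [← not_le]; tauto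
      simp [hstay, lazyWalk]
  rw [filter_congr fun x _ => hevent x]
  refine (card_filter_shift_prod (fun q : Bool × ZMod L => (lazyPos q.1 q.2.val k : ZMod L))
    (fun q => q.1 = true ↔ k < q.2.val) (fun g => tour g = a)).trans ?_
  rw [card_filter_bool_iff (fun m : ZMod L => k < m.val), ZMod.card]

lemma card_lazyWalk_move {a b : N} (hab : a ≠ b) (k : ℕ) :
    #{x | lazyWalk tour x k = a ∧ lazyWalk tour x (k + 1) = b} =
      L * #{i | tour i = a ∧ tour (i + 1) = b} := by
  have hevent : ∀ x : ZMod L × Bool × ZMod L,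
      (lazyWalk tour x k = a ∧ lazyWalk tour x (k + 1) = b) ↔
        (x.2.1 = true ↔ x.2.2.val ≤ k) ∧ (fun i => tour i = a ∧ tour (i + 1) = b)
          (x.1 + lazyPos x.2.1 x.2.2.val k) := by
    intro x
    rw [lazyWalk_succ]
    split_ifs with h
    · simp [h, lazyWalk]
    · simp only [h, false_and, iff_false, not_and]
      rintro rfl; exact hab
  rw [filter_congr fun x _ => hevent x]
  refine (card_filter_shift_prod (fun q : Bool × ZMod L => (lazyPos q.1 q.2.val k : ZMod L))
    (fun q => q.1 = true ↔ q.2.val ≤ k) (fun i => tour i = a ∧ tour (i + 1) = b)).trans ?_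
  rw [card_filter_bool_iff (fun m : ZMod L => m.val ≤ k), ZMod.card]

end LazyWalk

lemma card_filter_tour_edge {N : Type*} [DecidableEq N] {L : ℕ} [NeZero L] {tour : ZMod L → N}
    (hinj : Function.Injective fun i : ZMod L => (tour i, tour (i + 1))) {a b : N}
    (h : ∃ i, tour i = a ∧ tour (i + 1) = b) : #{i | tour i = a ∧ tour (i + 1) = b} = 1 := by
  obtain ⟨m, hm⟩ := h
  refine card_eq_one.2 ⟨m, eq_singleton_iff_unique_mem.2 ⟨by simpa using hm, fun i hi => ?_⟩⟩
  rw [mem_filter] at hi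
  exact hinj (Prod.ext (hi.2.1.trans hm.1.symm) (hi.2.2.trans hm.2.symm))

/-- Let D be a finite digraph (relation `rel`) with a self-loop at every node, admitting a
closed eulerian tour `tour : ZMod L → N` that uses each of the L non-self-loop edges
exactly once and visits each node equally often. Then there is a probability distribution
μ over walks of length 2L in D such that (i) the first and last nodes are independent and
each uniform over the nodes, and (ii) each of the 2L consecutive edges of the walk is
marginally distributed as: mass 1/2 spread uniformly over the self-loops (one per node)
and mass 1/2 spread uniformly over the L non-self-loop edges. -/
theorem stmt15 {N : Type*} [Fintype N] [DecidableEq N]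
    (rel : N → N → Prop) (hself : ∀ n, rel n n)
    (L : ℕ) [NeZero L] (tour : ZMod L → N)
    (hstep : ∀ i : ZMod L, rel (tour i) (tour (i + 1)) ∧ tour i ≠ tour (i + 1))
    (hinj : Function.Injective (fun i : ZMod L => (tour i, tour (i + 1))))
    (hsurj : ∀ a b : N, rel a b → a ≠ b → ∃ i : ZMod L, tour i = a ∧ tour (i + 1) = b)
    (hequal : ∀ n : N,
      (Finset.univ.filter (fun i : ZMod L => tour i = n)).card * Fintype.card N = L) :
    ∃ μ : (Fin (2 * L + 1) → N) → ℝ,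
      (∀ w, 0 ≤ μ w) ∧
      (∑ w, μ w = 1) ∧
      (∀ w, μ w ≠ 0 → ∀ j : Fin (2 * L), rel (w j.castSucc) (w j.succ)) ∧
      (∀ a b : N,
        ∑ w ∈ Finset.univ.filter
            (fun w : Fin (2 * L + 1) → N => w 0 = a ∧ w (Fin.last (2 * L)) = b), μ w
          = (1 / (Fintype.card N : ℝ)) ^ 2) ∧
      (∀ j : Fin (2 * L), ∀ a : N,
        ∑ w ∈ Finset.univ.filter
            (fun w : Fin (2 * L + 1) → N => w j.castSucc = a ∧ w j.succ = a), μ w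
          = 1 / (2 * (Fintype.card N : ℝ))) ∧
      (∀ j : Fin (2 * L), ∀ a b : N, rel a b → a ≠ b →
        ∑ w ∈ Finset.univ.filter
            (fun w : Fin (2 * L + 1) → N => w j.castSucc = a ∧ w j.succ = b), μ w
          = 1 / (2 * (L : ℝ))) := by
  have : Nonempty N := ⟨tour 0⟩
  have hN : (Fintype.card N : ℝ) ≠ 0 := by positivity
  have hL : (L : ℝ) ≠ 0 := by simp [NeZero.ne L]
  have hvisits (n : N) : (#{i | tour i = n} : ℝ) = L / Fintype.card N := by
    rw [eq_div_iff hN]; exact_mod_cast hequal n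
  have hΩ : (Fintype.card (ZMod L × Bool × ZMod L) : ℝ) = 2 * L ^ 2 := by
    simp [ZMod.card]; ring
  let W (x : ZMod L × Bool × ZMod L) (k : Fin (2 * L + 1)) : N := lazyWalk tour x k
  refine ⟨uniformLaw W, uniformLaw_nonneg W, sum_uniformLaw W, ?_, ?_, ?_, ?_⟩
  · intro w hw j
    obtain ⟨x, rfl⟩ := exists_eq_of_uniformLaw_ne_zero hw
    exact lazyWalk_rel tour rel hself (fun i => (hstep i).1) x j
  · intro a b
    have hcount : #{x | W x 0 = a ∧ W x (Fin.last (2 * L)) = b} =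
        2 * #{i | tour i = a} * #{i | tour i = b} :=
      card_lazyWalk_first_last tour a b
    rw [sum_filter_uniformLaw, hΩ, hcount]
    push_cast; rw [hvisits, hvisits]; field_simp
  · intro j a
    have hcount : #{x | W x j.castSucc = a ∧ W x j.succ = a} = L * #{i | tour i = a} :=
      card_lazyWalk_stay tour (fun i => (hstep i).2) j a
    rw [sum_filter_uniformLaw, hΩ, hcount]
    push_cast; rw [hvisits]; field_simp
  · intro j a b hab hne
    have hcount : #{x | W x j.castSucc = a ∧ W x j.succ = b} = L :=
      (card_lazyWalk_move tour hne j).trans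
        (by rw [card_filter_tour_edge hinj (hsurj a b hab hne), mul_one])
    rw [sum_filter_uniformLaw, hΩ, hcount]
    field_simp
end
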